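/- arXiv:2203.04243 — 5 statements merged into one kernel-verified Lean document; each statement's English description precedes it below -/
import Mathlib

section
/- Let d ≥ 1 and n ≥ 1, let c₀, c₁, …, c_n ∈ ℕ^{d+1} and, for j ∈ {1, …, n}, let e_j ∈ ℤ^{d+1} be defined by e_j[i] = c_j[i] − c_{j−1}[i] for all i. Let S₁, …, S_d ⊆ {0, 1, …, n} and set N_{j,i} = |{k ∈ S_i : k ≥ j}| for i ∈ {1, …, d} and j ∈ {0, …, n}. If (1) c₀[d+1] = Σ_{i=1}^{d} N_{0,i} · c₀[i], (2) for each j ∈ {1, …, n}, e_j[d+1] = Σ_{i=1}^{d} N_{j,i} · e_j[i], and (3) c_n[d+1] = 0, then for each i ∈ {1, …, d} and each j ∈ S_i one has c_j[i] = 0. -/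
/-- controlling-counter lemma, Lemma 10 of Czerwiński–Orlikowski:
coordinates `1, …, d` are represented by `i.castSucc` for `i : Fin d`, the controlling
coordinate `d+1` by `Fin.last d`; configurations `c₀, …, c_n` are `c j` for
`j : Fin (n+1)`; `N j i` counts the zero-tests scheduled for coordinate `i` at
positions `≥ j`. If the controlling coordinate starts at `Σᵢ N₀ᵢ·c₀[i]`, each segment
effect on it equals the `N`-weighted sum of segment effects on the controlled
coordinates, and it ends at `0`, then every scheduled zero-test indeed sees value `0`. -/
theorem controlling_counter_zero_tests (d n : ℕ) (hd : 1 ≤ d) (hn : 1 ≤ n)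
    (c : Fin (n + 1) → Fin (d + 1) → ℕ)
    (S : Fin d → Finset (Fin (n + 1)))
    (N : Fin (n + 1) → Fin d → ℕ)
    (hN : ∀ j i, N j i = ((S i).filter fun k => j ≤ k).card)
    (h1 : c 0 (Fin.last d) = ∑ i : Fin d, N 0 i * c 0 i.castSucc)
    (h2 : ∀ j : Fin n,
      (c j.succ (Fin.last d) : ℤ) - (c j.castSucc (Fin.last d) : ℤ) =
        ∑ i : Fin d, (N j.succ i : ℤ) *
          ((c j.succ i.castSucc : ℤ) - (c j.castSucc i.castSucc : ℤ)))
    (h3 : c (Fin.last n) (Fin.last d) = 0) :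
    ∀ i : Fin d, ∀ j ∈ S i, c j i.castSucc = 0 := by
  -- the invariant
  have inv : ∀ j : Fin (n+1), (c j (Fin.last d) : ℤ) =
      ∑ i : Fin d, (N j i : ℤ) * c j i.castSucc +
      ∑ i : Fin d, ∑ k ∈ (S i).filter (fun k => k < j), (c k i.castSucc : ℤ) := by
    intro j
    induction j using Fin.induction with
    | zero =>
      have : ∀ i : Fin d, (S i).filter (fun k => k < (0 : Fin (n+1))) = ∅ := by
        intro i; apply Finset.filter_false_of_mem; intro k _; exact Fin.not_lt_zero k
      simp only [this, Finset.sum_empty, Finset.sum_const_zero, add_zero]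
      exact_mod_cast h1.trans (by push_cast; ring)
    | succ j IH =>
      have Nrel : ∀ i : Fin d, (N j.castSucc i : ℤ) =
          (N j.succ i : ℤ) + (if j.castSucc ∈ S i then (1:ℤ) else 0) := by
        intro i
        rw [hN, hN]
        have hsplit : (S i).filter (fun k => j.castSucc ≤ k) =
            (S i).filter (fun k => j.succ ≤ k) ∪ (S i).filter (fun k => k = j.castSucc) := by
          rw [← Finset.filter_or]
          apply Finset.filter_congr
          intro k _
          simp only [Fin.le_def, Fin.ext_iff, Fin.val_succ, Fin.coe_castSucc, eq_iff_iff]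
          omega
        have hdisj : Disjoint ((S i).filter (fun k => j.succ ≤ k))
            ((S i).filter (fun k => k = j.castSucc)) := by
          rw [Finset.disjoint_filter]
          intro k _ hk hk2
          rw [hk2] at hk
          simp only [Fin.le_def, Fin.val_succ, Fin.coe_castSucc] at hk
          omega
        rw [hsplit, Finset.card_union_of_disjoint hdisj, Finset.filter_eq']
        split <;> simp
      have Fsplit : ∀ i : Fin d,
          ∑ k ∈ (S i).filter (fun k => k < j.succ), (c k i.castSucc : ℤ) =
          ∑ k ∈ (S i).filter (fun k => k < j.castSucc), (c k i.castSucc : ℤ) +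
          (if j.castSucc ∈ S i then (c j.castSucc i.castSucc : ℤ) else 0) := by
        intro i
        have hsplit : (S i).filter (fun k => k < j.succ) =
            (S i).filter (fun k => k < j.castSucc) ∪ (S i).filter (fun k => k = j.castSucc) := by
          rw [← Finset.filter_or]
          apply Finset.filter_congr
          intro k _
          simp only [Fin.lt_def, Fin.ext_iff, Fin.val_succ, Fin.coe_castSucc, eq_iff_iff]
          omega
        have hdisj : Disjoint ((S i).filter (fun k => k < j.castSucc))
            ((S i).filter (fun k => k = j.castSucc)) := by
          rw [Finset.disjoint_filter]
          intro k _ hk hk2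
          rw [hk2] at hk
          exact lt_irrefl _ hk
        rw [hsplit, Finset.sum_union hdisj, Finset.filter_eq']
        split <;> simp
      calc (c j.succ (Fin.last d) : ℤ)
          = (c j.castSucc (Fin.last d) : ℤ) +
            ∑ i : Fin d, (N j.succ i : ℤ) *
              ((c j.succ i.castSucc : ℤ) - (c j.castSucc i.castSucc : ℤ)) := by
            linarith [h2 j]
        _ = (∑ i : Fin d, (N j.castSucc i : ℤ) * c j.castSucc i.castSucc +
              ∑ i : Fin d, (N j.succ i : ℤ) *
                ((c j.succ i.castSucc : ℤ) - (c j.castSucc i.castSucc : ℤ))) +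
            ∑ i : Fin d, ∑ k ∈ (S i).filter (fun k => k < j.castSucc), (c k i.castSucc : ℤ) := by
            rw [IH]; ring
        _ = ∑ i : Fin d, ((N j.succ i : ℤ) * c j.succ i.castSucc +
              (if j.castSucc ∈ S i then (c j.castSucc i.castSucc : ℤ) else 0)) +
            ∑ i : Fin d, ∑ k ∈ (S i).filter (fun k => k < j.castSucc), (c k i.castSucc : ℤ) := by
            congr 1
            rw [← Finset.sum_add_distrib]
            apply Finset.sum_congr rfl
            intro i _
            rw [Nrel i]
            split_ifs <;> ring
        _ = ∑ i : Fin d, (N j.succ i : ℤ) * c j.succ i.castSucc +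
            ∑ i : Fin d, ∑ k ∈ (S i).filter (fun k => k < j.succ), (c k i.castSucc : ℤ) := by
            rw [Finset.sum_add_distrib]
            simp only [Fsplit]
            rw [Finset.sum_add_distrib]
            ring
  -- evaluate at last n
  have hlast := inv (Fin.last n)
  rw [h3] at hlast
  have hnn : ∀ i ∈ (Finset.univ : Finset (Fin d)),
      (0:ℤ) ≤ (N (Fin.last n) i : ℤ) * c (Fin.last n) i.castSucc +
        ∑ k ∈ (S i).filter (fun k => k < Fin.last n), (c k i.castSucc : ℤ) := by
    intro i _
    have : (0:ℤ) ≤ ∑ k ∈ (S i).filter (fun k => k < Fin.last n), (c k i.castSucc : ℤ) :=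
      Finset.sum_nonneg fun k _ => Int.ofNat_nonneg _
    positivity
  have hzero : ∀ i : Fin d,
      (N (Fin.last n) i : ℤ) * c (Fin.last n) i.castSucc +
        ∑ k ∈ (S i).filter (fun k => k < Fin.last n), (c k i.castSucc : ℤ) = 0 := by
    intro i
    have := (Finset.sum_eq_zero_iff_of_nonneg hnn).mp ?_ i (Finset.mem_univ i)
    · exact this
    · rw [← Finset.sum_add_distrib] at hlast
      omega
  intro i j hj
  have hz := hzero i
  have hs : (0:ℤ) ≤ ∑ k ∈ (S i).filter (fun k => k < Fin.last n), (c k i.castSucc : ℤ) :=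
    Finset.sum_nonneg fun k _ => Int.ofNat_nonneg _
  have hp : (0:ℤ) ≤ (N (Fin.last n) i : ℤ) * c (Fin.last n) i.castSucc := by positivity
  have h1' : (N (Fin.last n) i : ℤ) * c (Fin.last n) i.castSucc = 0 := by omega
  have h2' : ∑ k ∈ (S i).filter (fun k => k < Fin.last n), (c k i.castSucc : ℤ) = 0 := by omega
  rcases eq_or_lt_of_le (Fin.le_last j) with hjl | hjl
  · -- j = last n
    rw [hjl] at hj ⊢
    have hNpos : 0 < N (Fin.last n) i := by
      rw [hN]
      exact Finset.card_pos.mpr ⟨Fin.last n, Finset.mem_filter.mpr ⟨hj, le_refl _⟩⟩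
    have : (c (Fin.last n) i.castSucc : ℤ) = 0 := by
      rcases mul_eq_zero.mp h1' with h | h
      · exfalso; simp only [Nat.cast_eq_zero] at h; omega
      · exact h
    exact_mod_cast this
  · -- j < last n
    have hmem : j ∈ (S i).filter (fun k => k < Fin.last n) :=
      Finset.mem_filter.mpr ⟨hj, hjl⟩
    have := (Finset.sum_eq_zero_iff_of_nonneg (fun k _ => Int.ofNat_nonneg _)).mp h2' j hmem
    exact_mod_cast this
end

section
/- Let d ≥ 1 and n ≥ 1, let c₀, c₁, …, c_n ∈ ℕ^{d+1} and, for j ∈ {1, …, n}, let e_j ∈ ℤ^{d+1} be defined by e_j[i] = c_j[i] − c_{j−1}[i] for all i. Let S₁, …, S_d ⊆ {0, 1, …, n} and set N_{j,i} = |{k ∈ S_i : k ≥ j}| for i ∈ {1, …, d} and j ∈ {0, …, n}. If (1) c₀[d+1] = Σ_{i=1}^{d} N_{0,i} · c₀[i] and (2) for each j ∈ {1, …, n}, e_j[d+1] = Σ_{i=1}^{d} N_{j,i} · e_j[i], then c_n[d+1] = Σ_{i=1}^{d} Σ_{j∈S_i} c_j[i]. -/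
/-- summation identity underlying the controlling-counter lemma:
with the same setup as the controlling-counter lemma (coordinates `1, …, d` are
`i.castSucc`, the controlling coordinate `d+1` is `Fin.last d`), conditions (1) and (2)
force the final value of the controlling coordinate to equal the sum, over all scheduled
zero-tests, of the values of the tested coordinates at the tested positions. -/
theorem controlling_counter_sum (d n : ℕ) (hd : 1 ≤ d) (hn : 1 ≤ n)
    (c : Fin (n + 1) → Fin (d + 1) → ℕ)
    (S : Fin d → Finset (Fin (n + 1)))
    (N : Fin (n + 1) → Fin d → ℕ)
    (hN : ∀ j i, N j i = ((S i).filter fun k => j ≤ k).card)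
    (h1 : c 0 (Fin.last d) = ∑ i : Fin d, N 0 i * c 0 i.castSucc)
    (h2 : ∀ j : Fin n,
      (c j.succ (Fin.last d) : ℤ) - (c j.castSucc (Fin.last d) : ℤ) =
        ∑ i : Fin d, (N j.succ i : ℤ) *
          ((c j.succ i.castSucc : ℤ) - (c j.castSucc i.castSucc : ℤ))) :
    c (Fin.last n) (Fin.last d) = ∑ i : Fin d, ∑ j ∈ S i, c j i.castSucc := by
  -- splitting lemmas
  have hNsplit : ∀ (m : ℕ) (hm : m < n + 1) (hm' : m + 1 < n + 1) (i : Fin d),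
      (N ⟨m, hm⟩ i : ℤ) = (N ⟨m+1, hm'⟩ i : ℤ) +
        (if (⟨m, hm⟩ : Fin (n+1)) ∈ S i then 1 else 0) := by
    intro m hm hm' i
    rw [hN, hN]
    have hsplit : (S i).filter (fun k => (⟨m, hm⟩ : Fin (n+1)) ≤ k) =
        (S i).filter (fun k => (⟨m+1, hm'⟩ : Fin (n+1)) ≤ k) ∪
        (S i).filter (fun k => k = ⟨m, hm⟩) := by
      rw [← Finset.filter_or]
      apply Finset.filter_congr
      intro k _
      simp only [Fin.le_def, Fin.ext_iff]
      omega
    have hdisj : Disjoint ((S i).filter (fun k => (⟨m+1, hm'⟩ : Fin (n+1)) ≤ k))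
        ((S i).filter (fun k => k = ⟨m, hm⟩)) := by
      rw [Finset.disjoint_filter]
      intro k _ hk1 hk2
      rw [hk2] at hk1
      simp [Fin.le_def] at hk1
    rw [hsplit, Finset.card_union_of_disjoint hdisj, Finset.filter_eq']
    split <;> simp
  have hSsplit : ∀ (m : ℕ) (hm : m < n + 1) (i : Fin d),
      ∑ j ∈ (S i).filter (fun j : Fin (n+1) => (j : ℕ) < m + 1), (c j i.castSucc : ℤ) =
      (∑ j ∈ (S i).filter (fun j : Fin (n+1) => (j : ℕ) < m), (c j i.castSucc : ℤ)) +
        (if (⟨m, hm⟩ : Fin (n+1)) ∈ S i then (c ⟨m, hm⟩ i.castSucc : ℤ) else 0) := by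
    intro m hm i
    have hsplit : (S i).filter (fun j : Fin (n+1) => (j : ℕ) < m + 1) =
        (S i).filter (fun j : Fin (n+1) => (j : ℕ) < m) ∪ (S i).filter (fun k => k = ⟨m, hm⟩) := by
      rw [← Finset.filter_or]
      apply Finset.filter_congr
      intro k _
      simp only [Fin.ext_iff]
      omega
    have hdisj : Disjoint ((S i).filter (fun j : Fin (n+1) => (j : ℕ) < m))
        ((S i).filter (fun k => k = ⟨m, hm⟩)) := by
      rw [Finset.disjoint_filter]
      intro k _ hk1 hk2
      rw [hk2] at hk1
      simp at hk1
    rw [hsplit, Finset.sum_union hdisj, Finset.filter_eq']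
    split <;> simp
  have key : ∀ m : ℕ, ∀ hm : m < n + 1,
      (c ⟨m, hm⟩ (Fin.last d) : ℤ) =
        (∑ i : Fin d, (N ⟨m, hm⟩ i : ℤ) * (c ⟨m, hm⟩ i.castSucc : ℤ)) +
        ∑ i : Fin d, ∑ j ∈ (S i).filter (fun j : Fin (n+1) => (j : ℕ) < m), (c j i.castSucc : ℤ) := by
    intro m
    induction m with
    | zero =>
      intro hm
      have h0 : (⟨0, hm⟩ : Fin (n+1)) = 0 := rfl
      simp only [h0]
      have : ∀ i : Fin d, (S i).filter (fun j : Fin (n+1) => (j : ℕ) < 0) = ∅ := by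
        intro i; apply Finset.filter_false_of_mem; intro k _; omega
      simp only [this, Finset.sum_empty, Finset.sum_const_zero, add_zero]
      exact_mod_cast h1
    | succ m ih =>
      intro hm
      have hm' : m < n + 1 := by omega
      have hmn : m < n := by omega
      have hstep := h2 ⟨m, hmn⟩
      have hsucc : (⟨m, hmn⟩ : Fin n).succ = ⟨m+1, hm⟩ := rfl
      have hcast : (⟨m, hmn⟩ : Fin n).castSucc = ⟨m, hm'⟩ := rfl
      rw [hsucc, hcast] at hstep
      have ihm := ih hm'
      have e1 : ∀ i : Fin d, (N ⟨m, hm'⟩ i : ℤ) * (c ⟨m, hm'⟩ i.castSucc : ℤ) =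
          (N ⟨m+1, hm⟩ i : ℤ) * (c ⟨m, hm'⟩ i.castSucc : ℤ) +
          (if (⟨m, hm'⟩ : Fin (n+1)) ∈ S i then (c ⟨m, hm'⟩ i.castSucc : ℤ) else 0) := by
        intro i
        rw [hNsplit m hm' hm i]
        split <;> ring
      have := hSsplit m hm'
      calc (c ⟨m+1, hm⟩ (Fin.last d) : ℤ)
          = (c ⟨m, hm'⟩ (Fin.last d) : ℤ) +
            ∑ i : Fin d, (N ⟨m+1, hm⟩ i : ℤ) *
              ((c ⟨m+1, hm⟩ i.castSucc : ℤ) - (c ⟨m, hm'⟩ i.castSucc : ℤ)) := by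
            linarith [hstep]
        _ = (∑ i : Fin d, (N ⟨m+1, hm⟩ i : ℤ) * (c ⟨m+1, hm⟩ i.castSucc : ℤ)) +
            ∑ i : Fin d, ∑ j ∈ (S i).filter (fun j : Fin (n+1) => (j : ℕ) < m + 1), (c j i.castSucc : ℤ) := by
            rw [ihm]
            simp only [Finset.sum_congr rfl (fun i _ => e1 i),
              Finset.sum_congr rfl (fun i _ => hSsplit m hm' i)]
            rw [Finset.sum_add_distrib, Finset.sum_add_distrib]
            have : ∀ i : Fin d, (N ⟨m+1, hm⟩ i : ℤ) *
                ((c ⟨m+1, hm⟩ i.castSucc : ℤ) - (c ⟨m, hm'⟩ i.castSucc : ℤ)) =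
                (N ⟨m+1, hm⟩ i : ℤ) * (c ⟨m+1, hm⟩ i.castSucc : ℤ) -
                (N ⟨m+1, hm⟩ i : ℤ) * (c ⟨m, hm'⟩ i.castSucc : ℤ) := fun i => by ring
            rw [Finset.sum_congr rfl (fun i _ => this i), Finset.sum_sub_distrib]
            ring
  -- finish
  have hlast : (Fin.last n) = (⟨n, Nat.lt_succ_self n⟩ : Fin (n+1)) := rfl
  have hkey := key n (Nat.lt_succ_self n)
  have hNn : ∀ i : Fin d, (N ⟨n, Nat.lt_succ_self n⟩ i : ℤ) =
      (if (⟨n, Nat.lt_succ_self n⟩ : Fin (n+1)) ∈ S i then 1 else 0) := by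
    intro i
    rw [hN]
    have : (S i).filter (fun k => (⟨n, Nat.lt_succ_self n⟩ : Fin (n+1)) ≤ k) =
        (S i).filter (fun k => k = ⟨n, Nat.lt_succ_self n⟩) := by
      apply Finset.filter_congr
      intro k _
      simp only [Fin.le_def, Fin.ext_iff]
      omega
    rw [this, Finset.filter_eq']
    split <;> simp
  have hfull : ∀ i : Fin d, ∑ j ∈ S i, (c j i.castSucc : ℤ) =
      (∑ j ∈ (S i).filter (fun j : Fin (n+1) => (j : ℕ) < n), (c j i.castSucc : ℤ)) +
      (if (⟨n, Nat.lt_succ_self n⟩ : Fin (n+1)) ∈ S i then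
        (c ⟨n, Nat.lt_succ_self n⟩ i.castSucc : ℤ) else 0) := by
    intro i
    have := hSsplit n (Nat.lt_succ_self n) i
    rw [← this]
    apply Finset.sum_congr
    · symm; apply Finset.filter_true_of_mem; intro k _; omega
    · intros; rfl
  have final : (c (Fin.last n) (Fin.last d) : ℤ) =
      ∑ i : Fin d, ∑ j ∈ S i, (c j i.castSucc : ℤ) := by
    rw [hlast, hkey]
    rw [Finset.sum_congr rfl (fun i _ => hfull i), Finset.sum_add_distrib]
    have : ∀ i : Fin d, (N ⟨n, Nat.lt_succ_self n⟩ i : ℤ) *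
        (c ⟨n, Nat.lt_succ_self n⟩ i.castSucc : ℤ) =
        (if (⟨n, Nat.lt_succ_self n⟩ : Fin (n+1)) ∈ S i then
          (c ⟨n, Nat.lt_succ_self n⟩ i.castSucc : ℤ) else 0) := by
      intro i; rw [hNn i]; split <;> simp
    rw [Finset.sum_congr rfl (fun i _ => this i)]
    ring
  exact_mod_cast final
end

section
/- Let d ≥ 1 and B ≥ 1, and let A be a d-counter automaton with s states. If A has a B-bounded accepting run, then A has a B-bounded accepting run that fires at most s·d·B^{d−1} zero-test transitions. -/
/-- A `d`-dimensional vector addition system with states. -/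
structure VASS (d : ℕ) where
  Q : Finset ℕ
  T : Finset (ℕ × (Fin d → ℤ) × ℕ)
  T_src : ∀ t ∈ T, t.1 ∈ Q
  T_tgt : ∀ t ∈ T, t.2.2 ∈ Q

/-- A configuration: a state together with a vector of natural counter values. -/
abbrev VASS.Conf (d : ℕ) := ℕ × (Fin d → ℕ)

/-- One step of a VASS: fire a transition whose effect keeps all counters nonnegative. -/
def VASS.Step {d : ℕ} (V : VASS d) (c c' : VASS.Conf d) : Prop :=
  ∃ u : Fin d → ℤ, (c.1, u, c'.1) ∈ V.T ∧ ∀ i, (c'.2 i : ℤ) = (c.2 i : ℤ) + u i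

/-- Reachability: existence of a run (finite sequence of fired transitions). -/
def VASS.Reach {d : ℕ} (V : VASS d) : VASS.Conf d → VASS.Conf d → Prop :=
  Relation.ReflTransGen V.Step

/-- Unary size of a VASS: `|Q| + Σ_{(p,u,q)∈T} (1 + Σ_i |u_i|)`. -/
def VASS.unarySize {d : ℕ} (V : VASS d) : ℕ :=
  V.Q.card + ∑ t ∈ V.T, (1 + ∑ i, (t.2.1 i).natAbs)

/-- Binary size of a VASS: `|Q| + Σ_{(p,u,q)∈T} (1 + Σ_i (⌊log₂(|u_i|+1)⌋ + 1))`. -/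
def VASS.binarySize {d : ℕ} (V : VASS d) : ℕ :=
  V.Q.card + ∑ t ∈ V.T, (1 + ∑ i, (Nat.log 2 ((t.2.1 i).natAbs + 1) + 1))

/-- The edge relation of the underlying directed graph on states. -/
def VASS.Edge {d : ℕ} (V : VASS d) (p q : ℕ) : Prop :=
  ∃ u, (p, u, q) ∈ V.T

/-- A (simple) state-cycle: a nonempty duplicate-free list of states with edges along
the list and an edge from the last state back to the first one. -/
def VASS.IsCycle {d : ℕ} (V : VASS d) (l : List ℕ) : Prop :=
  l ≠ [] ∧ l.Nodup ∧ List.Chain' V.Edge (l ++ l.take 1)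

/-- A VASS is flat if every state lies on at most one state-cycle
(cycles are identified up to rotation). -/
def VASS.Flat {d : ℕ} (V : VASS d) : Prop :=
  ∀ (q : ℕ) (l₁ l₂ : List ℕ), V.IsCycle l₁ → V.IsCycle l₂ → q ∈ l₁ → q ∈ l₂ →
    List.IsRotated l₁ l₂

/-- A `d`-counter automaton: a `d`-VASS together with zero-test transitions and
distinguished initial and accepting states. -/
structure CounterAutomaton (d : ℕ) where
  Q : Finset ℕ
  T : Finset (ℕ × (Fin d → ℤ) × ℕ)
  Z : Finset (ℕ × Fin d × ℕ)
  q0 : ℕ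
  qacc : ℕ
  T_src : ∀ t ∈ T, t.1 ∈ Q
  T_tgt : ∀ t ∈ T, t.2.2 ∈ Q
  Z_src : ∀ t ∈ Z, t.1 ∈ Q
  Z_tgt : ∀ t ∈ Z, t.2.2 ∈ Q
  q0_mem : q0 ∈ Q
  qacc_mem : qacc ∈ Q

/-- A step of a counter automaton; the boolean records whether the step is a zero-test
(firable only when the tested counter is zero, leaving counters unchanged) or an
ordinary VASS transition. -/
def CounterAutomaton.Step {d : ℕ} (A : CounterAutomaton d)
    (c : VASS.Conf d) (zt : Bool) (c' : VASS.Conf d) : Prop :=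
  if zt then
    ∃ i : Fin d, (c.1, i, c'.1) ∈ A.Z ∧ c.2 i = 0 ∧ c'.2 = c.2
  else
    ∃ u : Fin d → ℤ, (c.1, u, c'.1) ∈ A.T ∧ ∀ i, (c'.2 i : ℤ) = (c.2 i : ℤ) + u i

/-- `c 0, c 1, …, c n` is a run of `A`, where `z j` records whether the `j`-th step
is a zero-test. -/
def CounterAutomaton.IsRun {d : ℕ} (A : CounterAutomaton d)
    (n : ℕ) (c : ℕ → VASS.Conf d) (z : ℕ → Bool) : Prop :=
  ∀ j < n, A.Step (c j) (z j) (c (j+1))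

/-- A run is accepting if it goes from the initial state with all counters zero to
the accepting state with all counters zero. -/
def CounterAutomaton.IsAccepting {d : ℕ} (A : CounterAutomaton d)
    (n : ℕ) (c : ℕ → VASS.Conf d) : Prop :=
  c 0 = (A.q0, fun _ => 0) ∧ c n = (A.qacc, fun _ => 0)

/-- A run is `B`-bounded if the sum of all counters is `< B` at every configuration. -/
def CounterAutomaton.BoundedRun {d : ℕ} (B n : ℕ) (c : ℕ → VASS.Conf d) : Prop :=
  ∀ j ≤ n, ∑ i, (c j).2 i < B

/-- The number of zero-test transitions fired along a run. -/
def CounterAutomaton.zeroTestCount (n : ℕ) (z : ℕ → Bool) : ℕ :=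
  ((Finset.range n).filter fun j => z j = true).card

/-!
A shortest `B`-bounded accepting run visits no configuration twice: the segment between two
visits could be cut out. Every zero test fires from a configuration `q(v)` with some `vᵢ = 0`
and all `vⱼ < B`, and there are at most `s·d·B^(d-1)` such configurations.
-/

open Finset Fintype

theorem Finset.card_filter_exists_piFinset_const_le {ι κ : Type*} [Fintype ι] [DecidableEq ι]
    [DecidableEq κ] (s : Finset κ) (x : κ) [DecidablePred fun f : ι → κ ↦ ∃ i, f i = x] :
    #{f ∈ piFinset fun _ : ι ↦ s | ∃ i, f i = x} ≤ Fintype.card ι * #s ^ (Fintype.card ι - 1) := by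
  have hcover : {f ∈ piFinset fun _ : ι ↦ s | ∃ i, f i = x} ⊆
      univ.biUnion fun i ↦ {f ∈ piFinset fun _ : ι ↦ s | f i = x} := by
    intro f hf
    obtain ⟨hfs, i, hi⟩ := mem_filter.mp hf
    exact mem_biUnion.mpr ⟨i, mem_univ i, mem_filter.mpr ⟨hfs, hi⟩⟩
  refine (card_le_card hcover).trans (card_biUnion_le_card_mul _ _ _ fun i _ ↦ ?_)
  rw [card_filter_piFinset_const]
  split_ifs <;> simp

namespace CounterAutomaton

variable {d B n j m : ℕ} {A : CounterAutomaton d} {c : ℕ → VASS.Conf d} {z : ℕ → Bool}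

def skipBlock (j m t : ℕ) : ℕ := if t < j then t else t + m

theorem skipBlock_le_add (j m t : ℕ) : skipBlock j m t ≤ t + m := by
  unfold skipBlock; split_ifs <;> omega

theorem IsRun.comp_skipBlock (hrun : A.IsRun n c z) (hjm : j + m ≤ n) (hc : c j = c (j + m)) :
    A.IsRun (n - m) (c ∘ skipBlock j m) (z ∘ skipBlock j m) := by
  intro t ht
  simp only [Function.comp, skipBlock]
  rcases lt_trichotomy (t + 1) j with h | h | h
  · rw [if_pos (by omega), if_pos h]
    exact hrun t (by omega)
  · rw [if_pos (by omega), if_neg (by omega), h, ← hc, ← h]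
    exact hrun t (by omega)
  · rw [if_neg (by omega), if_neg (by omega), show t + 1 + m = t + m + 1 by omega]
    exact hrun (t + m) (by omega)

theorem IsAccepting.comp_skipBlock (hacc : A.IsAccepting n c) (hjm : j + m ≤ n)
    (hc : c j = c (j + m)) : A.IsAccepting (n - m) (c ∘ skipBlock j m) := by
  refine ⟨?_, ?_⟩
  · rcases Nat.eq_zero_or_pos j with rfl | hj
    · rw [zero_add] at hc
      simpa [skipBlock, ← hc] using hacc.1
    · simpa [skipBlock, hj] using hacc.1
  · simpa [skipBlock, show ¬n - m < j by omega, show n - m + m = n by omega] using hacc.2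

theorem BoundedRun.comp_skipBlock (hbd : BoundedRun B n c) (hm : m ≤ n) :
    BoundedRun B (n - m) (c ∘ skipBlock j m) := fun t ht ↦
  hbd _ ((skipBlock_le_add j m t).trans (by omega))

theorem BoundedRun.lt (hbd : BoundedRun B n c) (hj : j ≤ n) (i : Fin d) : (c j).2 i < B :=
  (single_le_sum (fun _ _ ↦ Nat.zero_le _) (mem_univ i)).trans_lt (hbd j hj)

theorem Step.mem_Q_and_exists_eq_zero {c c' : VASS.Conf d} (hstep : A.Step c true c') :
    c.1 ∈ A.Q ∧ ∃ i, c.2 i = 0 := by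
  obtain ⟨i, hiZ, hi0, -⟩ := hstep
  exact ⟨A.Z_src _ hiZ, i, hi0⟩

theorem exists_run_injOn_of_exists_run
    (h : ∃ (n : ℕ) (c : ℕ → VASS.Conf d) (z : ℕ → Bool),
      A.IsRun n c z ∧ A.IsAccepting n c ∧ BoundedRun B n c) :
    ∃ (n : ℕ) (c : ℕ → VASS.Conf d) (z : ℕ → Bool),
      A.IsRun n c z ∧ A.IsAccepting n c ∧ BoundedRun B n c ∧ Set.InjOn c (Set.Iic n) := by
  classical
  obtain ⟨c, z, hrun, hacc, hbd⟩ := Nat.find_spec h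
  refine ⟨Nat.find h, c, z, hrun, hacc, hbd, ?_⟩
  intro j hj k hk hjk
  by_contra hne
  wlog hlt : j < k generalizing j k
  · exact this hk hj hjk.symm (Ne.symm hne) (by omega)
  obtain ⟨m, rfl⟩ := Nat.exists_eq_add_of_lt hlt
  have hjm : j + (m + 1) ≤ Nat.find h := by simpa [add_assoc] using hk
  have := Nat.find_min' h ⟨_, _, hrun.comp_skipBlock hjm hjk, hacc.comp_skipBlock hjm hjk,
    hbd.comp_skipBlock (by omega)⟩
  omega

theorem zeroTestCount_le_of_injOn (hrun : A.IsRun n c z) (hbd : BoundedRun B n c)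
    (hinj : Set.InjOn c (Set.Iic n)) :
    zeroTestCount n z ≤ #A.Q * d * B ^ (d - 1) := by
  set V : Finset (Fin d → ℕ) := {v ∈ piFinset fun _ ↦ range B | ∃ i, v i = 0}
  have hmaps : ∀ j ∈ {j ∈ range n | z j = true}, c j ∈ A.Q ×ˢ V := by
    intro j hj
    obtain ⟨hjn, hz⟩ := mem_filter.mp hj
    rw [mem_range] at hjn
    obtain ⟨hq, hzero⟩ := Step.mem_Q_and_exists_eq_zero (hz ▸ hrun j hjn)
    simpa [V, hq, hzero] using fun i ↦ hbd.lt hjn.le i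
  calc zeroTestCount n z ≤ #(A.Q ×ˢ V) :=
        card_le_card_of_injOn c hmaps <| hinj.mono fun j hj ↦
          Set.mem_Iic.mpr (mem_range.mp (mem_filter.mp hj).1).le
    _ = #A.Q * #V := card_product _ _
    _ ≤ #A.Q * (d * B ^ (d - 1)) := Nat.mul_le_mul_left _ <| by
        simpa [V] using card_filter_exists_piFinset_const_le (ι := Fin d) (range B) 0
    _ = #A.Q * d * B ^ (d - 1) := (mul_assoc _ _ _).symm

end CounterAutomaton

theorem bounded_run_few_zero_tests_general (d B : ℕ)
    (A : CounterAutomaton d)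
    (h : ∃ (n : ℕ) (c : ℕ → VASS.Conf d) (z : ℕ → Bool),
      A.IsRun n c z ∧ A.IsAccepting n c ∧ CounterAutomaton.BoundedRun B n c) :
    ∃ (n : ℕ) (c : ℕ → VASS.Conf d) (z : ℕ → Bool),
      A.IsRun n c z ∧ A.IsAccepting n c ∧ CounterAutomaton.BoundedRun B n c ∧
      CounterAutomaton.zeroTestCount n z ≤ A.Q.card * d * B ^ (d - 1) := by
  obtain ⟨n, c, z, hrun, hacc, hbd, hinj⟩ := CounterAutomaton.exists_run_injOn_of_exists_run h
  exact ⟨n, c, z, hrun, hacc, hbd, CounterAutomaton.zeroTestCount_le_of_injOn hrun hbd hinj⟩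

/-- if a `d`-counter automaton with `s` states has a `B`-bounded
accepting run, then it has one firing at most `s·d·B^(d-1)` zero-test transitions. -/
theorem bounded_run_few_zero_tests (d B : ℕ) (hd : 1 ≤ d) (hB : 1 ≤ B)
    (A : CounterAutomaton d)
    (h : ∃ (n : ℕ) (c : ℕ → VASS.Conf d) (z : ℕ → Bool),
      A.IsRun n c z ∧ A.IsAccepting n c ∧ CounterAutomaton.BoundedRun B n c) :
    ∃ (n : ℕ) (c : ℕ → VASS.Conf d) (z : ℕ → Bool),
      A.IsRun n c z ∧ A.IsAccepting n c ∧ CounterAutomaton.BoundedRun B n c ∧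
      CounterAutomaton.zeroTestCount n z ≤ A.Q.card * d * B ^ (d - 1) :=
  bounded_run_few_zero_tests_general d B A h
end

section
/- Let m ≥ 1 and B ∈ ℕ, and let a₁, …, a_{m+1} ∈ ℕ with a₁ + ⋯ + a_{m+1} = B. Let t₁, …, t_m ∈ ℕ satisfy t_k ≤ a_{k+1} for all k, and define a′₁ = a₁ + t₁, a′_k = a_k − t_{k−1} + t_k for 2 ≤ k ≤ m, and a′_{m+1} = a_{m+1} − t_m. Let s₁, …, s_m ∈ ℕ satisfy s_k ≤ a′_{m+1−k} for all k, and define a″_{m+1} = a′_{m+1} + s₁, a″_k = a′_k − s_{m+1−k} + s_{m+2−k} for 2 ≤ k ≤ m, and a″₁ = a′₁ − s_m. Then (1) Σ_{k=1}^{m} t_k + Σ_{k=1}^{m} s_k ≤ 2B − a₁ − a′_{m+1} ≤ 2B, and (2) if Σ_{k=1}^{m} t_k + Σ_{k=1}^{m} s_k = 2B, then a₁ = 0 and a″_k = a_k for all k ∈ {1, …, m+1}. -/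
private lemma sum_shift_aux (f : ℕ → ℕ) (p q : ℕ) :
    ∑ k ∈ Finset.Icc p q, f (k + 1) = ∑ k ∈ Finset.Icc (p + 1) (q + 1), f k := by
  rw [← Finset.map_add_right_Icc p q 1, Finset.sum_map]
  rfl

private lemma sum_reflect_aux (f : ℕ → ℕ) (m : ℕ) :
    ∑ k ∈ Finset.Icc 1 m, f (m + 1 - k) = ∑ k ∈ Finset.Icc 1 m, f k := by
  refine Finset.sum_nbij' (fun k => m + 1 - k) (fun k => m + 1 - k) ?_ ?_ ?_ ?_ ?_
  · intro x hx; simp only [Finset.mem_Icc] at hx ⊢; omega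
  · intro x hx; simp only [Finset.mem_Icc] at hx ⊢; omega
  · intro x hx; simp only [Finset.mem_Icc] at hx
    show m + 1 - (m + 1 - x) = x; omega
  · intro x hx; simp only [Finset.mem_Icc] at hx
    show m + 1 - (m + 1 - x) = x; omega
  · intro x hx; rfl

private lemma split_aux (f : ℕ → ℕ) (m : ℕ) (hm : 1 ≤ m) :
    ∑ k ∈ Finset.Icc 1 (m + 1), f k
      = f 1 + (∑ k ∈ Finset.Icc 2 m, f k) + f (m + 1) := by
  have h1 : Finset.Icc 1 (m + 1) = insert 1 (insert (m + 1) (Finset.Icc 2 m)) := by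
    ext x
    simp only [Finset.mem_insert, Finset.mem_Icc]
    omega
  rw [h1, Finset.sum_insert (by simp only [Finset.mem_insert, Finset.mem_Icc]; omega),
    Finset.sum_insert (by simp only [Finset.mem_Icc]; omega)]
  ring

private lemma split_bot_aux (f : ℕ → ℕ) (m : ℕ) (hm : 1 ≤ m) :
    ∑ k ∈ Finset.Icc 1 m, f k = f 1 + ∑ k ∈ Finset.Icc 2 m, f k := by
  have h1 : Finset.Icc 1 m = insert 1 (Finset.Icc 2 m) := by
    ext x
    simp only [Finset.mem_insert, Finset.mem_Icc]
    omega
  rw [h1, Finset.sum_insert (by simp only [Finset.mem_Icc]; omega)]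

/-- multi-counter zero-test gadget, Algorithm 1 of the multiplication
triples technique: counters `a 1, …, a (m+1)` sum to `B`; a forward pass of flushes
with amounts `t 1, …, t m` produces values `a'` and a backward pass with amounts
`s 1, …, s m` produces values `a''` (the defining equations are stated additively to
avoid truncated subtraction). Then the total flushed amount satisfies
`Σ t + Σ s ≤ 2B − a 1 − a' (m+1) ≤ 2B`, and if it equals `2B` then `a 1 = 0` and all
counters are restored to their original values. -/
theorem zero_test_gadget_multi (m B : ℕ) (hm : 1 ≤ m)
    (a a' a'' : ℕ → ℕ) (t s : ℕ → ℕ)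
    (hsum : ∑ k ∈ Finset.Icc 1 (m + 1), a k = B)
    (ht : ∀ k, 1 ≤ k → k ≤ m → t k ≤ a (k + 1))
    (ha'1 : a' 1 = a 1 + t 1)
    (ha'mid : ∀ k, 2 ≤ k → k ≤ m → a' k + t (k - 1) = a k + t k)
    (ha'last : a' (m + 1) + t m = a (m + 1))
    (hs : ∀ k, 1 ≤ k → k ≤ m → s k ≤ a' (m + 1 - k))
    (ha''last : a'' (m + 1) = a' (m + 1) + s 1)
    (ha''mid : ∀ k, 2 ≤ k → k ≤ m → a'' k + s (m + 1 - k) = a' k + s (m + 2 - k))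
    (ha''1 : a'' 1 + s m = a' 1) :
    ((∑ k ∈ Finset.Icc 1 m, t k) + (∑ k ∈ Finset.Icc 1 m, s k)) + a 1 + a' (m + 1)
        ≤ 2 * B ∧
    ((∑ k ∈ Finset.Icc 1 m, t k) + (∑ k ∈ Finset.Icc 1 m, s k) ≤ 2 * B) ∧
    ((∑ k ∈ Finset.Icc 1 m, t k) + (∑ k ∈ Finset.Icc 1 m, s k) = 2 * B →
      a 1 = 0 ∧ ∀ k, 1 ≤ k → k ≤ m + 1 → a'' k = a k) := by
  -- Forward bound: ∑ t ≤ ∑ a (k+1), and ∑ a (k+1) + a 1 = B.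
  have h1 : ∑ k ∈ Finset.Icc 1 m, t k ≤ ∑ k ∈ Finset.Icc 1 m, a (k + 1) :=
    Finset.sum_le_sum fun i hi => by
      simp only [Finset.mem_Icc] at hi; exact ht i hi.1 hi.2
  have e1 : (∑ k ∈ Finset.Icc 1 m, a (k + 1)) + a 1 = B := by
    have hsh := sum_shift_aux a 1 m
    norm_num at hsh
    rw [hsh, ← hsum, split_aux a m hm]
    have : ∑ k ∈ Finset.Icc 2 (m + 1), a k
        = (∑ k ∈ Finset.Icc 2 m, a k) + a (m + 1) :=
      Finset.sum_Icc_succ_top (by omega) a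
    omega
  -- Telescoping: ∑_{Icc 1 (m+1)} a' = B.
  have emid : (∑ k ∈ Finset.Icc 2 m, a' k) + ∑ k ∈ Finset.Icc 2 m, t (k - 1)
      = (∑ k ∈ Finset.Icc 2 m, a k) + ∑ k ∈ Finset.Icc 2 m, t k := by
    rw [← Finset.sum_add_distrib, ← Finset.sum_add_distrib]
    refine Finset.sum_congr rfl fun i hi => ?_
    simp only [Finset.mem_Icc] at hi
    exact ha'mid i hi.1 hi.2
  have eshift : ∑ k ∈ Finset.Icc 2 m, t (k - 1) = ∑ k ∈ Finset.Icc 1 (m - 1), t k := by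
    have h := sum_shift_aux (fun k => t (k - 1)) 1 (m - 1)
    rw [show m - 1 + 1 = m by omega] at h
    norm_num at h
    exact h.symm
  have etop : ∑ k ∈ Finset.Icc 1 m, t k = (∑ k ∈ Finset.Icc 1 (m - 1), t k) + t m := by
    have := Finset.sum_Icc_succ_top (a := 1) (b := m - 1) (by omega) t
    rw [show m - 1 + 1 = m by omega] at this
    exact this
  have ebot : ∑ k ∈ Finset.Icc 1 m, t k = t 1 + ∑ k ∈ Finset.Icc 2 m, t k :=
    split_bot_aux t m hm
  have e2 : (∑ k ∈ Finset.Icc 1 m, a' k) + a' (m + 1) = B := by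
    have hS' : ∑ k ∈ Finset.Icc 1 (m + 1), a' k
        = a' 1 + (∑ k ∈ Finset.Icc 2 m, a' k) + a' (m + 1) := split_aux a' m hm
    have hS : ∑ k ∈ Finset.Icc 1 (m + 1), a k
        = a 1 + (∑ k ∈ Finset.Icc 2 m, a k) + a (m + 1) := split_aux a m hm
    have hS2 : ∑ k ∈ Finset.Icc 1 m, a' k
        = a' 1 + ∑ k ∈ Finset.Icc 2 m, a' k := split_bot_aux a' m hm
    omega
  -- Backward bound.
  have h2 : ∑ k ∈ Finset.Icc 1 m, s k ≤ ∑ k ∈ Finset.Icc 1 m, a' (m + 1 - k) :=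
    Finset.sum_le_sum fun i hi => by
      simp only [Finset.mem_Icc] at hi; exact hs i hi.1 hi.2
  have e3 : ∑ k ∈ Finset.Icc 1 m, a' (m + 1 - k) = ∑ k ∈ Finset.Icc 1 m, a' k :=
    sum_reflect_aux a' m
  refine ⟨by omega, by omega, fun heq => ?_⟩
  -- Equality case.
  have ha1 : a 1 = 0 := by omega
  have halast : a' (m + 1) = 0 := by omega
  have hteq : ∀ k ∈ Finset.Icc 1 m, t k = a (k + 1) := by
    rw [← Finset.sum_eq_sum_iff_of_le
      (fun i hi => by simp only [Finset.mem_Icc] at hi; exact ht i hi.1 hi.2)]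
    omega
  have hseq : ∀ k ∈ Finset.Icc 1 m, s k = a' (m + 1 - k) := by
    rw [← Finset.sum_eq_sum_iff_of_le
      (fun i hi => by simp only [Finset.mem_Icc] at hi; exact hs i hi.1 hi.2)]
    omega
  have ha'eq : ∀ k, 1 ≤ k → k ≤ m → a' k = a (k + 1) := by
    intro k hk1 hkm
    rcases eq_or_lt_of_le hk1 with h | h
    · subst h
      have := hteq 1 (by simp only [Finset.mem_Icc]; omega)
      omega
    · have hk2 : 2 ≤ k := h
      have h1' := ha'mid k hk2 hkm
      have h2' := hteq (k - 1) (by simp only [Finset.mem_Icc]; omega)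
      have h3' := hteq k (by simp only [Finset.mem_Icc]; omega)
      rw [show k - 1 + 1 = k by omega] at h2'
      omega
  refine ⟨ha1, fun k hk1 hk2 => ?_⟩
  have hseq' : ∀ k, 1 ≤ k → k ≤ m → s k = a' (m + 1 - k) := fun k h1' h2' =>
    hseq k (by simp only [Finset.mem_Icc]; omega)
  rcases eq_or_lt_of_le hk1 with h | h
  · -- k = 1
    subst h
    have h1' := hseq' m hm le_rfl
    rw [show m + 1 - m = 1 by omega] at h1'
    omega
  rcases eq_or_lt_of_le hk2 with h' | h'
  · -- k = m + 1
    subst h'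
    have h1' := hseq' 1 le_rfl hm
    rw [show m + 1 - 1 = m by omega] at h1'
    have h2' := ha'eq m hm le_rfl
    omega
  · -- 2 ≤ k ≤ m
    have hk2' : 2 ≤ k := h
    have hkm : k ≤ m := by omega
    have h1' := ha''mid k hk2' hkm
    have h2' := hseq' (m + 1 - k) (by omega) (by omega)
    rw [show m + 1 - (m + 1 - k) = k by omega] at h2'
    have h3' := hseq' (m + 2 - k) (by omega) (by omega)
    rw [show m + 1 - (m + 2 - k) = k - 1 by omega] at h3'
    have h4' := ha'eq (k - 1) (by omega) (by omega)
    rw [show k - 1 + 1 = k by omega] at h4'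
    omega
end

section
/- Let B ∈ ℕ and let T₀, T₁, T₂, … ∈ ℕ satisfy T_ℓ ≤ 2(B − ℓ) for all ℓ < B. Define c₀ = B² and c_{ℓ+1} = c_ℓ − T_ℓ + 1 (as integers) for ℓ < B. Then for every ℓ ≤ B: (1) c_ℓ ≥ (B − ℓ)², and (2) c_ℓ = (B − ℓ)² if and only if T_j = 2(B − j) for every j < ℓ. -/
/-- invariant of the quadratic pairs technique: starting from
`c 0 = B²`, if the `ℓ`-th round decreases `c` by a flush amount `T ℓ ≤ 2(B − ℓ)` and
then adds `1`, then `c ℓ ≥ (B − ℓ)²` for all `ℓ ≤ B`, with equality iff every earlier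
round flushed the maximal amount `2(B − j)`. -/
theorem quadratic_pairs_invariant (B : ℕ) (T : ℕ → ℕ) (c : ℕ → ℤ)
    (hT : ∀ ℓ < B, T ℓ ≤ 2 * (B - ℓ))
    (hc0 : c 0 = (B : ℤ) ^ 2)
    (hcstep : ∀ ℓ < B, c (ℓ + 1) = c ℓ - T ℓ + 1) :
    ∀ ℓ ≤ B,
      ((B - ℓ : ℕ) : ℤ) ^ 2 ≤ c ℓ ∧
      (c ℓ = ((B - ℓ : ℕ) : ℤ) ^ 2 ↔ ∀ j < ℓ, T j = 2 * (B - j)) := by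
  intro ℓ
  induction ℓ with
  | zero => intro _; simp [hc0]
  | succ n ih =>
    intro h
    have hn : n < B := h
    obtain ⟨ih1, ih2⟩ := ih hn.le
    have hBn : ((B - n : ℕ) : ℤ) = (B : ℤ) - n := by
      push_cast [hn.le]; ring
    have hBn1 : ((B - (n + 1) : ℕ) : ℤ) = (B : ℤ) - n - 1 := by
      push_cast [h]; ring
    rw [hBn] at ih1 ih2
    have hTn : (T n : ℤ) ≤ 2 * ((B : ℤ) - n) := by
      have := hT n hn
      zify [hn.le] at this
      linarith
    have hcn := hcstep n hn
    constructor
    · rw [hBn1, hcn]; nlinarith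
    · rw [hBn1, hcn]
      constructor
      · intro heq
        have h1 : c n = ((B : ℤ) - n) ^ 2 := by nlinarith
        have h2 : (T n : ℤ) = 2 * ((B : ℤ) - n) := by nlinarith
        intro j hj
        rcases Nat.lt_succ_iff_lt_or_eq.mp hj with hj' | rfl
        · exact ih2.mp h1 j hj'
        · zify [hn.le]; linarith
      · intro hall
        have hcn' : c n = ((B : ℤ) - n) ^ 2 :=
          ih2.mpr fun j hj => hall j (hj.trans (Nat.lt_succ_self n))
        have hTn' : (T n : ℤ) = 2 * ((B : ℤ) - n) := by
          have := hall n (Nat.lt_succ_self n)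
          zify [hn.le] at this
          linarith
        rw [hcn', hTn']; ring
end
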